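/- Let G and G' be finitely generated Abelian groups, let S ⊆ G and S' ⊆ G' be symmetric finite generating sets, and let φ : Cay(G,S) → Cay(G',S') be a graph isomorphism. If γ : ℤ → G is an algebraic line in Cay(G,S) (of type s for some s ∈ S) that is a quasi-convex geodesic line, then φ ∘ γ is a quasi-algebraic quasi-convex geodesic line in Cay(G',S'); in particular all steps φ(γ(n+1)) − φ(γ(n)) have the same image under π_{G'}. -/

import Mathlib

/-- The Cayley graph of an (additive) group `G` with respect to a subset `S`:
vertices are elements of `G`, and `g`, `h` are adjacent iff `h - g ∈ (S ∪ -S) \ {0}`. -/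
def cayley {G : Type*} [AddCommGroup G] (S : Set G) : SimpleGraph G where
  Adj g h := g ≠ h ∧ (h - g ∈ S ∨ g - h ∈ S)
  symm := ⟨fun _ _ hadj => ⟨hadj.1.symm, hadj.2.symm⟩⟩
  loopless := ⟨fun _ hadj => hadj.1 rfl⟩

/-- `p 0, p 1, …, p n` is a geodesic segment in `Γ`: a path whose length realizes
the distance between its endpoints. -/
def IsGeodesicSegment {V : Type*} (Γ : SimpleGraph V) (n : ℕ) (p : ℕ → V) : Prop :=
  (∀ i < n, Γ.Adj (p i) (p (i + 1))) ∧ Γ.dist (p 0) (p n) = n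

/-- A geodesic line in `Γ`. -/
def IsGeodesicLine {V : Type*} (Γ : SimpleGraph V) (γ : ℤ → V) : Prop :=
  ∀ j k : ℤ, Γ.dist (γ j) (γ k) = (j - k).natAbs

/-- A convex geodesic line: a geodesic line such that for all `n ≤ m` the only geodesic
segment from `γ n` to `γ m` is `(γ n, γ (n+1), …, γ m)`. -/
def IsConvexGeodesicLine {V : Type*} (Γ : SimpleGraph V) (γ : ℤ → V) : Prop :=
  IsGeodesicLine Γ γ ∧
    ∀ n m : ℤ, n ≤ m → ∀ (k : ℕ) (p : ℕ → V),
      IsGeodesicSegment Γ k p → p 0 = γ n → p k = γ m →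
        ∀ j ≤ k, p j = γ (n + j)

/-- A quasi-convex geodesic line: a geodesic line such that geodesic segments joining
points `c`-close to the line stay uniformly `C`-close to it (fellow-traveller style). -/
def IsQuasiConvexGeodesicLine {V : Type*} (Γ : SimpleGraph V) (γ : ℤ → V) : Prop :=
  IsGeodesicLine Γ γ ∧
    ∀ c : ℕ, ∃ C : ℕ, ∀ n m : ℤ, n ≤ m → ∀ x y : V,
      Γ.dist x (γ n) ≤ c → Γ.dist y (γ m) ≤ c →
        ∀ p : ℕ → V, IsGeodesicSegment Γ (Γ.dist x y) p →
          p 0 = x → p (Γ.dist x y) = y →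
            ∀ j ≤ Γ.dist x y, Γ.dist (p j) (γ (n + j)) ≤ C

/-- A quasi-algebraic line of quasi-type `t ∈ G/tors G` in `Cay(G,S)`: a ℤ-path in the
Cayley graph all of whose steps project to `t` in `G/tors G`. -/
def IsQuasiAlgebraicLine {G : Type*} [AddCommGroup G] (S : Set G)
    (t : G ⧸ AddCommGroup.torsion G) (γ : ℤ → G) : Prop :=
  (∀ n : ℤ, (cayley S).Adj (γ n) (γ (n + 1))) ∧
    ∀ n : ℤ, QuotientAddGroup.mk' (AddCommGroup.torsion G) (γ (n + 1) - γ n) = t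

/-! Translation by `s` is an automorphism of `Cay(G,S)`; conjugating it by `φ` gives an automorphism
`F` of `Cay(G',S')` that moves every vertex to a neighbour and maps `φ (γ n)` to `φ (γ (n+1))`.
For every homomorphism `ψ : G' →+ ℤ`, the function `z ↦ ψ (F z - z)` is harmonic, because
`t ↦ F (z + t) - F z` permutes the nonzero generators; it takes finitely many values, so by the
maximum principle it is constant. Such `ψ` separate the points of `G'/tors G'`, hence all steps
of `φ ∘ γ` have the same class there. Quasi-convexity is metric, so graph isomorphisms preserve it. -/

namespace SimpleGraph

variable {V W : Type*} {A : SimpleGraph V} {B : SimpleGraph W}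

theorem Hom.edist_le (f : A →g B) (u v : V) : B.edist (f u) (f v) ≤ A.edist u v := by
  by_cases h : A.Reachable u v
  · obtain ⟨p, hp⟩ := h.exists_walk_length_eq_edist
    rw [← hp, ← Walk.length_map f p]
    exact B.edist_le _
  · rw [edist_eq_top_of_not_reachable h]
    exact le_top

theorem Iso.edist_eq (e : A ≃g B) (u v : V) : B.edist (e u) (e v) = A.edist u v :=
  le_antisymm (e.toHom.edist_le u v) (by simpa using e.symm.toHom.edist_le (e u) (e v))

theorem Iso.dist_eq (e : A ≃g B) (u v : V) : B.dist (e u) (e v) = A.dist u v := by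
  simp only [dist, e.edist_eq]

theorem Iso.dist_symm_apply (e : A ≃g B) (x : W) (v : V) :
    A.dist (e.symm x) v = B.dist x (e v) := by
  rw [← e.dist_eq, RelIso.apply_symm_apply]

end SimpleGraph

section Transport

variable {V W : Type*} {A : SimpleGraph V} {B : SimpleGraph W}

theorem IsGeodesicSegment.map_iso (e : A ≃g B) {n : ℕ} {p : ℕ → V}
    (hp : IsGeodesicSegment A n p) : IsGeodesicSegment B n (e ∘ p) :=
  ⟨fun i hi => e.map_adj_iff.2 (hp.1 i hi), (e.dist_eq _ _).trans hp.2⟩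

theorem IsGeodesicLine.map_iso (e : A ≃g B) {γ : ℤ → V} (hγ : IsGeodesicLine A γ) :
    IsGeodesicLine B (e ∘ γ) :=
  fun j k => (e.dist_eq _ _).trans (hγ j k)

theorem IsQuasiConvexGeodesicLine.map_iso (e : A ≃g B) {γ : ℤ → V}
    (hγ : IsQuasiConvexGeodesicLine A γ) : IsQuasiConvexGeodesicLine B (e ∘ γ) := by
  refine ⟨hγ.1.map_iso e, fun c => ?_⟩
  obtain ⟨C, hC⟩ := hγ.2 c
  refine ⟨C, fun n m hnm x y hx hy p hp hp0 hpy j hj => ?_⟩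
  have hxy : A.dist (e.symm x) (e.symm y) = B.dist x y := e.symm.dist_eq x y
  have hpull := hC n m hnm (e.symm x) (e.symm y) (by rwa [e.dist_symm_apply])
    (by rwa [e.dist_symm_apply]) (e.symm ∘ p)
  rw [hxy] at hpull
  have := hpull (hp.map_iso e.symm) (congrArg e.symm hp0) (congrArg e.symm hpy) j hj
  rwa [Function.comp_apply, e.dist_symm_apply] at this

end Transport

section Cayley

variable {G : Type*} [AddCommGroup G] {S : Set G}

theorem cayley_adj_add {t : G} (ht : t ∈ S) (ht0 : t ≠ 0) (g : G) : (cayley S).Adj g (g + t) :=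
  ⟨fun h => ht0 (left_eq_add.mp h), Or.inl (by rwa [add_sub_cancel_left])⟩

theorem cayley_adj_iff (hS : ∀ t ∈ S, -t ∈ S) {g h : G} :
    (cayley S).Adj g h ↔ h - g ∈ S ∧ h - g ≠ 0 := by
  refine ⟨fun ⟨hne, hmem⟩ => ⟨?_, sub_ne_zero.2 hne.symm⟩, fun ⟨hmem, hne⟩ => ?_⟩
  · rcases hmem with hmem | hmem
    · exact hmem
    · simpa using hS _ hmem
  · simpa using cayley_adj_add hmem hne g

variable (S) in
def cayleyAddRight (a : G) : cayley S ≃g cayley S where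
  toEquiv := Equiv.addRight a
  map_rel_iff' := by simp [cayley]

@[simp]
theorem cayleyAddRight_apply (a g : G) : cayleyAddRight S a g = g + a := rfl

theorem sum_cayleyAut_add_sub_eq_sum (hS : ∀ t ∈ S, -t ∈ S) {D : Finset G}
    (hD : ∀ t, t ∈ D ↔ t ∈ S ∧ t ≠ 0) (F : cayley S ≃g cayley S) {M : Type*}
    [AddCommMonoid M] (f : G → M) (z : G) :
    ∑ t ∈ D, f (F (z + t) - F z) = ∑ t ∈ D, f t := by
  have hmem : ∀ w t, t ∈ D ↔ (cayley S).Adj w (w + t) := fun w t => by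
    rw [hD, cayley_adj_iff hS, add_sub_cancel_left]
  refine Finset.sum_nbij' (fun t => F (z + t) - F z) (fun u => F.symm (F z + u) - z)
    (fun t ht => ?_) (fun u hu => ?_) (fun t _ => by simp) (fun u _ => by simp) (fun _ _ => rfl)
  · rw [hmem (F z), add_sub_cancel]
    exact F.map_adj_iff.2 ((hmem z t).1 ht)
  · rw [hmem z, add_sub_cancel]
    simpa using F.symm.map_adj_iff.2 ((hmem (F z) u).1 hu)

end Cayley

section Harmonic

variable {G M : Type*} [AddCommGroup G] [AddCommGroup M] [LinearOrder M] [IsOrderedAddMonoid M]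

def IsDiscreteHarmonic (D : Finset G) (g : G → M) : Prop :=
  ∀ z, ∑ t ∈ D, (g (z + t) - g z) = 0

variable {D : Finset G} {g : G → M}

theorem IsDiscreteHarmonic.apply_add_eq_of_forall_le (hg : IsDiscreteHarmonic D g) {z : G}
    (hz : ∀ w, g w ≤ g z) {t : G} (ht : t ∈ D) : g (z + t) = g z :=
  sub_eq_zero.1 <|
    (Finset.sum_eq_zero_iff_of_nonpos fun _ _ => sub_nonpos.2 (hz _)).1 (hg z) t ht

theorem IsDiscreteHarmonic.eq_of_forall_le (hg : IsDiscreteHarmonic D g)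
    (hDsym : ∀ t ∈ D, -t ∈ D) (hDgen : AddSubgroup.closure (D : Set G) = ⊤) {z : G}
    (hz : ∀ w, g w ≤ g z) (x : G) : g x = g z := by
  have hstep : ∀ w, g w = g z → ∀ t ∈ D, g (w + t) = g z := fun w hw t ht =>
    hw ▸ hg.apply_add_eq_of_forall_le (hw ▸ hz) ht
  have hclosure : ∀ a ∈ AddSubgroup.closure (D : Set G), g (z + a) = g z := by
    suffices ∀ a ∈ AddSubgroup.closure (D : Set G), ∀ w, g w = g z → g (w + a) = g z from
      fun a ha => this a ha z rfl
    intro a ha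
    induction ha using AddSubgroup.closure_induction'' with
    | mem t ht => exact fun w hw => hstep w hw t ht
    | neg_mem t ht => exact fun w hw => hstep w hw (-t) (hDsym t ht)
    | zero => simp
    | add a b _ _ iha ihb => exact fun w hw => by rw [← add_assoc]; exact ihb _ (iha w hw)
  simpa using hclosure (x - z) (hDgen ▸ AddSubgroup.mem_top _)

theorem IsDiscreteHarmonic.eq_of_finite_range (hg : IsDiscreteHarmonic D g)
    (hDsym : ∀ t ∈ D, -t ∈ D) (hDgen : AddSubgroup.closure (D : Set G) = ⊤)
    (hfin : (Set.range g).Finite) (x y : G) : g x = g y := by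
  obtain ⟨_, ⟨z, rfl⟩, hz⟩ := Set.exists_max_image _ id hfin (Set.range_nonempty g)
  have hz' : ∀ w, g w ≤ g z := fun w => hz _ ⟨w, rfl⟩
  rw [hg.eq_of_forall_le hDsym hDgen hz' x, hg.eq_of_forall_le hDsym hDgen hz' y]

end Harmonic

theorem isDiscreteHarmonic_cayleyAut_sub {G M : Type*} [AddCommGroup G] [AddCommGroup M]
    [LinearOrder M] [IsOrderedAddMonoid M] {S : Set G} (hS : ∀ t ∈ S, -t ∈ S) {D : Finset G}
    (hD : ∀ t, t ∈ D ↔ t ∈ S ∧ t ≠ 0) (F : cayley S ≃g cayley S) (ψ : G →+ M) :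
    IsDiscreteHarmonic D fun z => ψ (F z - z) := by
  intro z
  calc ∑ t ∈ D, (ψ (F (z + t) - (z + t)) - ψ (F z - z))
      = ∑ t ∈ D, (ψ (F (z + t) - F z) - ψ t) :=
        Finset.sum_congr rfl fun t _ => by rw [← map_sub, ← map_sub]; congr 1; abel
    _ = 0 := by rw [Finset.sum_sub_distrib, sum_cayleyAut_add_sub_eq_sum hS hD, sub_self]

theorem AddCommGroup.mk_torsion_eq_of_forall_intHom_eq {G : Type*} [AddCommGroup G]
    [AddGroup.FG G] {x y : G} (h : ∀ ψ : G →+ ℤ, ψ x = ψ y) :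
    QuotientAddGroup.mk' (torsion G) x = QuotientAddGroup.mk' (torsion G) y := by
  have : Module.Finite ℤ (G ⧸ torsion G) :=
    Module.Finite.of_surjective (QuotientAddGroup.mk' (torsion G)).toIntLinearMap
      (QuotientAddGroup.mk'_surjective _)
  rw [← sub_eq_zero, ← Module.forall_dual_apply_eq_zero_iff ℤ]
  intro f
  simpa [sub_eq_zero] using h (f.toAddMonoidHom.comp (QuotientAddGroup.mk' (torsion G)))

theorem mk_torsion_cayleyAut_sub_eq {G : Type*} [AddCommGroup G] [AddGroup.FG G] {S : Set G}
    (hSfin : S.Finite) (hS : ∀ t ∈ S, -t ∈ S) (hSgen : AddSubgroup.closure S = ⊤)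
    (F : cayley S ≃g cayley S) (hF : ∀ z, (cayley S).Adj z (F z)) (x y : G) :
    QuotientAddGroup.mk' (AddCommGroup.torsion G) (F x - x) =
      QuotientAddGroup.mk' (AddCommGroup.torsion G) (F y - y) := by
  classical
  refine AddCommGroup.mk_torsion_eq_of_forall_intHom_eq fun ψ => ?_
  set D := hSfin.toFinset.erase 0
  have hD : ∀ t, t ∈ D ↔ t ∈ S ∧ t ≠ 0 := fun t => by simp [D, and_comm]
  have hDsym : ∀ t ∈ D, -t ∈ D := fun t ht => by
    rw [hD] at ht ⊢
    exact ⟨hS t ht.1, neg_ne_zero.2 ht.2⟩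
  have hDgen : AddSubgroup.closure (D : Set G) = ⊤ := by
    rw [show (D : Set G) = S \ {0} by ext; simp [hD], AddSubgroup.closure_sdiff_zero,
      hSgen]
  have hfin : (Set.range fun z => ψ (F z - z)).Finite :=
    (hSfin.image ψ).subset <| Set.range_subset_iff.2 fun z =>
      ⟨_, ((cayley_adj_iff hS).1 (hF z)).1, rfl⟩
  exact (isDiscreteHarmonic_cayleyAut_sub hS hD F ψ).eq_of_finite_range hDsym hDgen hfin x y

theorem iso_map_algebraic_to_quasiAlgebraic_general {G G' : Type*} [AddCommGroup G]
    [AddCommGroup G'] [AddGroup.FG G'] (S : Set G) (S' : Set G')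
    (hS'fin : S'.Finite) (hS'sym : ∀ t ∈ S', -t ∈ S')
    (hS'gen : AddSubgroup.closure S' = ⊤)
    (φ : cayley S ≃g cayley S')
    (γ : ℤ → G) (s : G) (hs : s ∈ S) (h : G) (hγalg : ∀ n : ℤ, γ n = h + n • s)
    (hγ : IsQuasiConvexGeodesicLine (cayley S) γ) :
    (∃ s' ∈ S',
        IsQuasiAlgebraicLine S' (QuotientAddGroup.mk' (AddCommGroup.torsion G') s')
          (fun n => φ (γ n))) ∧
      IsQuasiConvexGeodesicLine (cayley S') (fun n => φ (γ n)) := by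
  have hstep : ∀ n, γ (n + 1) = γ n + s := fun n => by
    rw [hγalg, hγalg, add_zsmul, one_zsmul, add_assoc]
  have hs0 : s ≠ 0 := fun h0 => by
    have hdist := hγ.1 (0 + 1) 0
    rw [hstep, h0, add_zero, SimpleGraph.dist_self] at hdist
    simp at hdist
  let F := (φ.symm.trans (cayleyAddRight S s)).trans φ
  have hFγ : ∀ n, F (φ (γ n)) = φ (γ (n + 1)) := fun n => by simp [F, hstep]
  have hF : ∀ u, (cayley S').Adj u (F u) := fun u => by
    simpa [F] using φ.map_adj_iff.2 (cayley_adj_add hs hs0 (φ.symm u))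
  have hadj : ∀ n, (cayley S').Adj (φ (γ n)) (φ (γ (n + 1))) := fun n => hFγ n ▸ hF _
  refine ⟨⟨φ (γ 1) - φ (γ 0), ?_, hadj, fun n => ?_⟩, hγ.map_iso φ⟩
  · simpa using ((cayley_adj_iff hS'sym).1 (hadj 0)).1
  · simpa [hFγ] using
      mk_torsion_cayleyAut_sub_eq hS'fin hS'sym hS'gen F hF (φ (γ n)) (φ (γ 0))

/-- A graph isomorphism between Cayley graphs of finitely generated Abelian groups
(w.r.t. symmetric finite generating sets) maps algebraic quasi-convex geodesic lines
to quasi-algebraic quasi-convex geodesic lines; in particular all steps of the image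
line have the same image in `G'/tors G'`. -/
theorem iso_map_algebraic_to_quasiAlgebraic {G G' : Type*} [AddCommGroup G]
    [AddCommGroup G'] [AddGroup.FG G] [AddGroup.FG G'] (S : Set G) (S' : Set G')
    (hSfin : S.Finite) (hSsym : ∀ t ∈ S, -t ∈ S) (hSgen : AddSubgroup.closure S = ⊤)
    (hS'fin : S'.Finite) (hS'sym : ∀ t ∈ S', -t ∈ S')
    (hS'gen : AddSubgroup.closure S' = ⊤)
    (φ : cayley S ≃g cayley S')
    (γ : ℤ → G) (s : G) (hs : s ∈ S) (h : G) (hγalg : ∀ n : ℤ, γ n = h + n • s)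
    (hγ : IsQuasiConvexGeodesicLine (cayley S) γ) :
    (∃ s' ∈ S',
        IsQuasiAlgebraicLine S' (QuotientAddGroup.mk' (AddCommGroup.torsion G') s')
          (fun n => φ (γ n))) ∧
      IsQuasiConvexGeodesicLine (cayley S') (fun n => φ (γ n)) :=
  iso_map_algebraic_to_quasiAlgebraic_general S S' hS'fin hS'sym hS'gen φ γ s hs h hγalg hγ
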